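/- Let g be a generalized Hermite kernel of order k with homogeneity exponent α (in particular g is not almost everywhere zero). Then C_g := ∫_{(0,∞)^k} g(x) g(1+x) dx is strictly positive. -/

import Mathlib

open MeasureTheory Filter

noncomputable section

/-- The open positive orthant `(0,∞)^k` in `ℝ^k`. -/
def posOrthant (k : ℕ) : Set (Fin k → ℝ) := {x | ∀ j, 0 < x j}

/-- A generalized Hermite kernel of order `k` with homogeneity exponent `α`:
a nonzero measurable function on `(0,∞)^k`, extended by `0` off the positive orthant,
homogeneous of exponent `α ∈ (-(k+1)/2, -k/2)`, satisfying the integrability condition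
`∫_{(0,∞)^k} |g(x) g(1+x)| dx < ∞`. -/
structure IsGenHermiteKernel (k : ℕ) (α : ℝ) (g : (Fin k → ℝ) → ℝ) : Prop where
  measurable : Measurable g
  zero_off : ∀ x : Fin k → ℝ, x ∉ posOrthant k → g x = 0
  nonzero : ¬ (∀ᵐ x ∂(volume.restrict (posOrthant k)), g x = 0)
  homog : ∀ lam : ℝ, 0 < lam → ∀ x ∈ posOrthant k, g (lam • x) = lam ^ α * g x
  alpha_lb : -((k : ℝ) + 1) / 2 < α
  alpha_ub : α < -(k : ℝ) / 2
  int_cond : IntegrableOn (fun x => g x * g (1 + x)) (posOrthant k) volume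

/-- `h_t(x) = ∫_0^t g(s·1 − x) ds`. -/
def hKer {k : ℕ} (g : (Fin k → ℝ) → ℝ) (t : ℝ) (x : Fin k → ℝ) : ℝ :=
  ∫ s in Set.Ioc (0 : ℝ) t, g (fun j => s - x j)

/-!
For `h_t(x) = ∫_{(0,t]} g(s𝟙 - x) ds`, Fubini and the homogeneity of `g` give
`∫ h_t² = C_g · ∫∫_{(0,t]²} |s - u|^(2α+k) ds du`, and the double integral is finite because
`2α + k > -1`. So if `C_g ≤ 0`, every `h_t` vanishes almost everywhere. Differentiating
`t ↦ h_t(x)` (Lebesgue differentiation, over rational `t`) then gives `g(s𝟙 - x) = 0` for almost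
every `(s, x)`, and by translation invariance `g = 0` almost everywhere.
-/

open Set

namespace IsGenHermiteKernel

variable {k : ℕ} {α : ℝ} {g : (Fin k → ℝ) → ℝ}

theorem map_smul (hg : IsGenHermiteKernel k α g) (c : ℝ) (hc : 0 < c) (x : Fin k → ℝ) :
    g (c • x) = c ^ α * g x := by
  by_cases hx : x ∈ posOrthant k
  · exact hg.homog c hc x hx
  · have hcx : c • x ∉ posOrthant k := fun h => hx fun j => pos_of_mul_pos_right (h j) hc.le
    rw [hg.zero_off _ hx, hg.zero_off _ hcx, mul_zero]

theorem setIntegral_posOrthant (hg : IsGenHermiteKernel k α g) :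
    ∫ x in posOrthant k, g x * g (1 + x) = ∫ x, g x * g (1 + x) :=
  setIntegral_eq_integral_of_forall_compl_eq_zero fun x hx => by rw [hg.zero_off x hx, zero_mul]

theorem integrable_mul_one_add (hg : IsGenHermiteKernel k α g) :
    Integrable fun x => g x * g (1 + x) :=
  hg.int_cond.integrable_of_forall_notMem_eq_zero fun x hx => by rw [hg.zero_off x hx, zero_mul]

theorem neg_one_lt (hg : IsGenHermiteKernel k α g) : -1 < 2 * α + k := by
  linarith [hg.alpha_lb]

end IsGenHermiteKernel

theorem locallyIntegrable_abs_rpow {β : ℝ} (hβ : -1 < β) :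
    LocallyIntegrable fun v : ℝ => |v| ^ β :=
  locallyIntegrable_of_norm_le_rpow (by simp) (C := 1) (α := -β) (by simpa using neg_lt.1 hβ)
    (ae_of_all _ fun v => by simp [abs_of_nonneg (Real.rpow_nonneg (abs_nonneg v) β)])
    (continuous_abs.measurable.pow_const β).aestronglyMeasurable

theorem integrable_abs_sub_rpow {β : ℝ} (hβ : -1 < β) (a b : ℝ) :
    Integrable (fun p : ℝ × ℝ => |p.1 - p.2| ^ β)
      ((volume.restrict (Ioc a b)).prod (volume.restrict (Ioc a b))) := by
  set J := Icc (a - b) (b - a)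
  have hJ : Integrable (J.indicator fun v : ℝ => |v| ^ β) :=
    ((locallyIntegrable_abs_rpow hβ).integrableOn_isCompact isCompact_Icc).integrable_indicator
      measurableSet_Icc
  have hI : Integrable ((Ioc a b).indicator fun _ => (1 : ℝ)) :=
    (integrableOn_const measure_Ioc_lt_top.ne).integrable_indicator measurableSet_Ioc
  have hconv := (hI.convolution_integrand (ContinuousLinearMap.mul ℝ ℝ) hJ).restrict
    (s := Ioc a b ×ˢ Ioc a b)
  rw [← Measure.prod_restrict] at hconv
  refine hconv.congr ?_
  rw [Measure.prod_restrict]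
  filter_upwards [ae_restrict_mem (measurableSet_Ioc.prod measurableSet_Ioc)] with p ⟨h1, h2⟩
  have hJp : p.1 - p.2 ∈ J := ⟨by linarith [h1.1, h2.2], by linarith [h1.2, h2.1]⟩
  simp [indicator_of_mem h2, indicator_of_mem hJp]

theorem ae_ne_prod_self {μ : Measure ℝ} [SFinite μ] [NullSingletonClass μ] :
    ∀ᵐ p ∂μ.prod μ, p.1 ≠ p.2 :=
  (Measure.ae_prod_iff_ae_ae (measurableSet_eq_fun measurable_fst measurable_snd).compl).2
    (ae_of_all _ fun s => by simpa [eq_comm] using μ.ae_ne s)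

theorem ae_eq_zero_of_forall_rat_intervalIntegral_eq_zero {f : ℝ → ℝ} {a b : ℝ}
    (hf : IntervalIntegrable f volume a b)
    (h : ∀ q : ℚ, (q : ℝ) ∈ Ioo a b → ∫ s in a..q, f s = 0) :
    ∀ᵐ s, s ∈ Ioo a b → f s = 0 := by
  have hIoo : Ioo a b ⊆ uIcc a b := Ioo_subset_Icc_self.trans Icc_subset_uIcc
  have hF : EqOn (fun t => ∫ s in a..t, f s) 0 (Ioo a b) := by
    refine EqOn.of_subset_closure (s := Ioo a b ∩ range Rat.cast) ?_
      ((intervalIntegral.continuousOn_primitive_interval' hf left_mem_uIcc).mono hIoo)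
      continuousOn_const inter_subset_left
      (Rat.denseRange_cast.open_subset_closure_inter isOpen_Ioo)
    rintro _ ⟨ht, q, rfl⟩
    exact h q ht
  filter_upwards [hf.ae_hasDerivAt_integral] with s hs hsab
  have hzero : HasDerivAt (fun t => ∫ s in a..t, f s) 0 s :=
    (hasDerivAt_const s 0).congr_of_eventuallyEq (eventually_of_mem (Ioo_mem_nhds hsab.1 hsab.2) hF)
  exact (hs (hIoo hsab) a left_mem_uIcc).unique hzero

theorem Integrable.of_prod_mul_self {X : Type*} [MeasurableSpace X] {μ : Measure X} [SFinite μ]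
    {f : X → ℝ} (hf : AEStronglyMeasurable f μ)
    (h : Integrable (fun p : X × X => f p.1 * f p.2) (μ.prod μ)) : Integrable f μ := by
  refine ⟨hf, ?_⟩
  have hfin := h.2
  simp only [HasFiniteIntegral, enorm_mul] at hfin ⊢
  rw [lintegral_prod_mul hf.enorm hf.enorm] at hfin
  exact ENNReal.mul_self_lt_top_iff.1 hfin

section Homogeneous

variable {k : ℕ} {α : ℝ} {g : (Fin k → ℝ) → ℝ}

theorem abs_map_smul (hg : ∀ c : ℝ, 0 < c → ∀ x, g (c • x) = c ^ α * g x) (c : ℝ) (hc : 0 < c)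
    (x : Fin k → ℝ) : |g (c • x)| = c ^ α * |g x| := by
  rw [hg c hc, abs_mul, abs_of_pos (Real.rpow_pos_of_pos hc α)]

theorem mul_sub_smul_one_comp_affine (hg : ∀ c : ℝ, 0 < c → ∀ x, g (c • x) = c ^ α * g x)
    {s u : ℝ} (hus : u < s) (z : Fin k → ℝ) :
    g (s • 1 - (u • 1 - (s - u) • z)) * g (u • 1 - (u • 1 - (s - u) • z))
      = (s - u) ^ (2 * α) * (g z * g (1 + z)) := by
  have hc : 0 < s - u := sub_pos.2 hus
  have h1 : s • (1 : Fin k → ℝ) - (u • 1 - (s - u) • z) = (s - u) • (1 + z) := by module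
  have h2 : u • (1 : Fin k → ℝ) - (u • 1 - (s - u) • z) = (s - u) • z := by module
  rw [h1, h2, hg _ hc, hg _ hc, two_mul, Real.rpow_add hc]
  ring

theorem integrable_mul_sub_smul_one_iff (hg : ∀ c : ℝ, 0 < c → ∀ x, g (c • x) = c ^ α * g x)
    {s u : ℝ} (hus : u < s) :
    Integrable (fun x => g (s • 1 - x) * g (u • 1 - x)) ↔ Integrable fun x => g x * g (1 + x) := by
  have hc : 0 < s - u := sub_pos.2 hus
  rw [← integrable_comp_sub_left _ (u • 1), ← integrable_comp_smul_iff volume _ hc.ne']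
  simp only [mul_sub_smul_one_comp_affine hg hus]
  exact integrable_const_mul_iff (isUnit_iff_ne_zero.2 (Real.rpow_pos_of_pos hc _).ne') _

theorem integral_mul_sub_smul_one (hg : ∀ c : ℝ, 0 < c → ∀ x, g (c • x) = c ^ α * g x)
    {s u : ℝ} (hus : u < s) :
    ∫ x, g (s • 1 - x) * g (u • 1 - x) = (s - u) ^ (2 * α + k) * ∫ x, g x * g (1 + x) := by
  have hc : 0 < s - u := sub_pos.2 hus
  calc ∫ x, g (s • 1 - x) * g (u • 1 - x)
      = ∫ x, g (s • 1 - (u • 1 - x)) * g (u • 1 - (u • 1 - x)) :=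
        (integral_sub_left_eq_self (fun x => g (s • 1 - x) * g (u • 1 - x)) volume _).symm
    _ = (s - u) ^ k *
          ∫ z, g (s • 1 - (u • 1 - (s - u) • z)) * g (u • 1 - (u • 1 - (s - u) • z)) := by
        rw [Measure.integral_comp_smul_of_nonneg volume
            (fun y => g (s • 1 - (u • 1 - y)) * g (u • 1 - (u • 1 - y))) _ (hR := hc.le),
          Module.finrank_fin_fun, smul_eq_mul, mul_inv_cancel_left₀ (pow_pos hc k).ne']
    _ = (s - u) ^ (2 * α + k) * ∫ x, g x * g (1 + x) := by
        simp only [mul_sub_smul_one_comp_affine hg hus, integral_const_mul, Real.rpow_add hc,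
          Real.rpow_natCast]
        ring

theorem integral_mul_sub_smul_one_of_ne (hg : ∀ c : ℝ, 0 < c → ∀ x, g (c • x) = c ^ α * g x)
    {s u : ℝ} (hsu : s ≠ u) :
    ∫ x, g (s • 1 - x) * g (u • 1 - x) = |s - u| ^ (2 * α + k) * ∫ x, g x * g (1 + x) := by
  rcases hsu.lt_or_gt with h | h
  · simp_rw [mul_comm (g (s • 1 - _))]
    rw [integral_mul_sub_smul_one hg h, abs_sub_comm, abs_of_pos (sub_pos.2 h)]
  · rw [integral_mul_sub_smul_one hg h, abs_of_pos (sub_pos.2 h)]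

theorem integrable_mul_sub_smul_one (hg : ∀ c : ℝ, 0 < c → ∀ x, g (c • x) = c ^ α * g x)
    (hK : Integrable fun x => g x * g (1 + x)) {s u : ℝ} (hsu : s ≠ u) :
    Integrable fun x => g (s • 1 - x) * g (u • 1 - x) := by
  rcases hsu.lt_or_gt with h | h
  · simp_rw [mul_comm (g (s • 1 - _))]
    exact (integrable_mul_sub_smul_one_iff hg h).2 hK
  · exact (integrable_mul_sub_smul_one_iff hg h).2 hK

variable {μ : Measure ℝ} [SFinite μ] [NullSingletonClass μ]

theorem integrable_mul_sub_smul_one_prod (hm : Measurable g)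
    (hg : ∀ c : ℝ, 0 < c → ∀ x, g (c • x) = c ^ α * g x)
    (hK : Integrable fun x => g x * g (1 + x))
    (hW : Integrable (fun p : ℝ × ℝ => |p.1 - p.2| ^ (2 * α + k)) (μ.prod μ)) :
    Integrable (fun q : (ℝ × ℝ) × (Fin k → ℝ) => g (q.1.1 • 1 - q.2) * g (q.1.2 • 1 - q.2))
      ((μ.prod μ).prod volume) := by
  rw [integrable_prod_iff (by fun_prop : Measurable _).aestronglyMeasurable]
  refine ⟨?_, ?_⟩
  · filter_upwards [ae_ne_prod_self] with p hp using integrable_mul_sub_smul_one hg hK hp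
  · refine (hW.mul_const (∫ x, |g x| * |g (1 + x)|)).congr ?_
    filter_upwards [ae_ne_prod_self] with p hp
    simp only [Real.norm_eq_abs, abs_mul]
    exact (integral_mul_sub_smul_one_of_ne (g := fun x => |g x|) (abs_map_smul hg) hp).symm

theorem integral_sq_integral_sub_smul_one (hm : Measurable g)
    (hg : ∀ c : ℝ, 0 < c → ∀ x, g (c • x) = c ^ α * g x)
    (hK : Integrable fun x => g x * g (1 + x))
    (hW : Integrable (fun p : ℝ × ℝ => |p.1 - p.2| ^ (2 * α + k)) (μ.prod μ)) :
    ∫ x, (∫ s, g (s • 1 - x) ∂μ) ^ 2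
      = (∫ p, |p.1 - p.2| ^ (2 * α + k) ∂μ.prod μ) * ∫ x, g x * g (1 + x) := by
  calc ∫ x, (∫ s, g (s • 1 - x) ∂μ) ^ 2
      = ∫ x, ∫ p, g (p.1 • 1 - x) * g (p.2 • 1 - x) ∂μ.prod μ := by
        simp_rw [sq, ← integral_prod_mul]
    _ = ∫ p, (∫ x, g (p.1 • 1 - x) * g (p.2 • 1 - x)) ∂μ.prod μ :=
        (integral_integral_swap (integrable_mul_sub_smul_one_prod hm hg hK hW)).symm
    _ = ∫ p, |p.1 - p.2| ^ (2 * α + k) * (∫ x, g x * g (1 + x)) ∂μ.prod μ :=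
        integral_congr_ae <| by
          filter_upwards [ae_ne_prod_self] with p hp using integral_mul_sub_smul_one_of_ne hg hp
    _ = (∫ p, |p.1 - p.2| ^ (2 * α + k) ∂μ.prod μ) * ∫ x, g x * g (1 + x) :=
        integral_mul_const _ _

theorem integrable_sq_integral_sub_smul_one (hm : Measurable g)
    (hg : ∀ c : ℝ, 0 < c → ∀ x, g (c • x) = c ^ α * g x)
    (hK : Integrable fun x => g x * g (1 + x))
    (hW : Integrable (fun p : ℝ × ℝ => |p.1 - p.2| ^ (2 * α + k)) (μ.prod μ)) :
    Integrable fun x => (∫ s, g (s • 1 - x) ∂μ) ^ 2 := by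
  simp_rw [sq, ← integral_prod_mul]
  exact (integrable_mul_sub_smul_one_prod hm hg hK hW).integral_prod_right

theorem ae_integrable_comp_sub_smul_one (hm : Measurable g)
    (hg : ∀ c : ℝ, 0 < c → ∀ x, g (c • x) = c ^ α * g x)
    (hK : Integrable fun x => g x * g (1 + x))
    (hW : Integrable (fun p : ℝ × ℝ => |p.1 - p.2| ^ (2 * α + k)) (μ.prod μ)) :
    ∀ᵐ x, Integrable (fun s => g (s • 1 - x)) μ := by
  filter_upwards [(integrable_mul_sub_smul_one_prod hm hg hK hW).prod_left_ae] with x hx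
  exact Integrable.of_prod_mul_self (hm.comp (by fun_prop)).aestronglyMeasurable hx

end Homogeneous

section HermiteKernel

variable {k : ℕ} {α : ℝ} {g : (Fin k → ℝ) → ℝ}

theorem hKer_eq (t : ℝ) (x : Fin k → ℝ) :
    hKer g t x = ∫ s in Ioc 0 t, g (s • 1 - x) := by
  unfold hKer
  congr! 3 with s
  ext j
  simp

theorem ae_eq_zero_of_forall_hKer_ae_eq_zero (hm : Measurable g)
    (hint : ∀ᵐ x, IntegrableOn (fun s : ℝ => g (s • 1 - x)) (Ioc 0 1))
    (h : ∀ t, ∀ᵐ x, hKer g t x = 0) : ∀ᵐ y, g y = 0 := by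
  have hrat : ∀ᵐ x, ∀ q : ℚ, hKer g q x = 0 := ae_all_iff.2 fun q => h q
  have hsec : ∀ᵐ x, ∀ᵐ s ∂volume.restrict (Ioo (0 : ℝ) 1), g (s • 1 - x) = 0 := by
    filter_upwards [hrat, hint] with x hx hix
    rw [ae_restrict_iff' measurableSet_Ioo]
    refine ae_eq_zero_of_forall_rat_intervalIntegral_eq_zero
      ((intervalIntegrable_iff_integrableOn_Ioc_of_le zero_le_one).2 hix) fun q hq => ?_
    rw [intervalIntegral.integral_of_le hq.1.le, ← hKer_eq, hx q]
  rw [Measure.ae_ae_comm (p := fun x (s : ℝ) => g (s • 1 - x) = 0)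
    (measurableSet_eq_fun (by fun_prop) measurable_const)] at hsec
  have : (ae (volume.restrict (Ioo (0 : ℝ) 1))).NeBot := ae_neBot.2 (by simp)
  obtain ⟨s, hs⟩ := hsec.exists
  filter_upwards [(Measure.measurePreserving_sub_left volume (s • 1)).quasiMeasurePreserving.ae hs]
    with y hy
  rwa [sub_sub_cancel] at hy

theorem IsGenHermiteKernel.hKer_ae_eq_zero (hg : IsGenHermiteKernel k α g)
    (hC : ∫ x, g x * g (1 + x) ≤ 0) (t : ℝ) : ∀ᵐ x, hKer g t x = 0 := by
  have hW := integrable_abs_sub_rpow hg.neg_one_lt 0 t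
  have hsq := integrable_sq_integral_sub_smul_one hg.measurable hg.map_smul
    hg.integrable_mul_one_add hW
  have hid := integral_sq_integral_sub_smul_one hg.measurable hg.map_smul
    hg.integrable_mul_one_add hW
  simp_rw [← hKer_eq] at hsq hid
  have hzero : ∫ x, hKer g t x ^ 2 = 0 :=
    le_antisymm (hid ▸ mul_nonpos_of_nonneg_of_nonpos
      (integral_nonneg fun _ => Real.rpow_nonneg (abs_nonneg _) _) hC)
      (integral_nonneg fun _ => sq_nonneg _)
  filter_upwards [(integral_eq_zero_iff_of_nonneg (fun _ => sq_nonneg _) hsq).1 hzero] with x hx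
  exact pow_eq_zero_iff two_ne_zero |>.1 hx

end HermiteKernel

theorem stmt3_general {k : ℕ} {α : ℝ} {g : (Fin k → ℝ) → ℝ}
    (hg : IsGenHermiteKernel k α g) :
    0 < ∫ x in posOrthant k, g x * g (1 + x) := by
  rw [hg.setIntegral_posOrthant]
  by_contra! hC
  have hW := integrable_abs_sub_rpow hg.neg_one_lt 0 1
  have hint := ae_integrable_comp_sub_smul_one hg.measurable hg.map_smul
    hg.integrable_mul_one_add hW
  exact hg.nonzero <| ae_restrict_of_ae <|
    ae_eq_zero_of_forall_hKer_ae_eq_zero hg.measurable hint (hg.hKer_ae_eq_zero hC)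

theorem stmt3 {k : ℕ} (hk : 1 ≤ k) {α : ℝ} {g : (Fin k → ℝ) → ℝ}
    (hg : IsGenHermiteKernel k α g) :
    0 < ∫ x in posOrthant k, g x * g (1 + x) :=
  stmt3_general hg
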